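/- arXiv:1807.11789 — 5 statements merged into one kernel-verified Lean document; each statement's English description precedes it below -/
import Mathlib

section
/- Let (𝔤, [·,·], K) be a quadratic Lie algebra, i.e. K is a nondegenerate symmetric invariant bilinear form on 𝔤. Let K^♯: 𝔤 → 𝔤* be the induced isomorphism K^♯(u)(v) = K(u,v). On the graded vector space 𝔤*[1] ⊕ 𝔤 define 𝔩_1 = (K^♯)^{-1}: 𝔤* → 𝔤 and 𝔩_2(u+ξ, v+η) = [u,v] + ad*_u η − ad*_v ξ, where ad*_u is the coadjoint action. Then (𝔤*[1] ⊕ 𝔤; 𝔩_1, 𝔩_2) is a strict Lie 2-algebra, i.e. a 2-term differential graded Lie algebra: 𝔩_1 commutes appropriately with 𝔩_2, namely 𝔩_2((K^♯)^{-1}(ξ), η) = 𝔩_2(ξ, (K^♯)^{-1}(η)) and (K^♯)^{-1}𝔩_2(u,η) = 𝔩_2(u, (K^♯)^{-1}(η)), and the graded Jacobi identities hold. -/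
/-!
The coadjoint action is the dual Lie module structure on `Module.Dual ℝ g`, so the mixed Jacobi
identity is just the module axiom `lie_lie`. Invariance of `K` says precisely that
`K^♯ : 𝔤 → 𝔤*` intertwines the adjoint and coadjoint actions; hence so does its inverse, which is
the second chain condition, and the first one is this equivariance combined with the
skew-symmetry of the bracket.
-/

namespace LinearMap.BilinForm

variable {R L : Type*} [CommRing R] [LieRing L] [LieAlgebra R L]

section Module

variable {M : Type*} [AddCommGroup M] [Module R M] [LieRingModule L M] [LieModule R L M]
  {Φ : LinearMap.BilinForm R M}

theorem lieInvariant.apply_lie (hΦ : Φ.lieInvariant L) (x : L) (m : M) :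
    Φ ⁅x, m⁆ = ⁅x, Φ m⁆ := by
  ext n
  rw [Module.Dual.lie_apply, hΦ]

theorem lieInvariant.symm_lie (hΦ : Φ.lieInvariant L) {e : M ≃ₗ[R] Module.Dual R M}
    (he : ∀ m, e m = Φ m) (x : L) (η : Module.Dual R M) :
    e.symm ⁅x, η⁆ = ⁅x, e.symm η⁆ := by
  rw [e.symm_apply_eq, he, hΦ.apply_lie, ← he, e.apply_symm_apply]

end Module

section Algebra

variable {Φ : LinearMap.BilinForm R L}

theorem lieInvariant.lie_apply_comm (hΦ : Φ.lieInvariant L) (x y : L) :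
    ⁅x, Φ y⁆ = -⁅y, Φ x⁆ := by
  rw [← hΦ.apply_lie, ← hΦ.apply_lie, ← map_neg, lie_skew]

theorem lieInvariant.lie_symm_comm (hΦ : Φ.lieInvariant L) {e : L ≃ₗ[R] Module.Dual R L}
    (he : ∀ x, e x = Φ x) (ξ η : Module.Dual R L) :
    ⁅e.symm ξ, η⁆ = -⁅e.symm η, ξ⁆ := by
  obtain ⟨x, rfl⟩ := e.surjective ξ
  obtain ⟨y, rfl⟩ := e.surjective η
  rw [e.symm_apply_apply, e.symm_apply_apply, he, he, hΦ.lie_apply_comm]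

end Algebra

end LinearMap.BilinForm

theorem quadratic_lie_algebra_gives_strict_lie_2_algebra_general
    (g : Type) [LieRing g] [LieAlgebra ℝ g]
    (K : g →ₗ[ℝ] g →ₗ[ℝ] ℝ)
    (hK_inv : ∀ u v w : g, K ⁅u, v⁆ w = - K v ⁅u, w⁆)
    -- `K^♯ : 𝔤 → 𝔤*` is an isomorphism induced by the nondegenerate form `K`
    (Ksharp : g ≃ₗ[ℝ] Module.Dual ℝ g)
    (hKsharp : ∀ u v : g, Ksharp u v = K u v)
    -- the coadjoint action
    (coad : g → Module.Dual ℝ g → Module.Dual ℝ g)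
    (hcoad : ∀ (u w : g) (η : Module.Dual ℝ g), coad u η w = - η ⁅u, w⁆) :
    -- 𝔩₂(𝔩₁ ξ, η) = 𝔩₂(ξ, 𝔩₁ η), i.e. 𝔩₂((K^♯)⁻¹ξ, η) = − 𝔩₂((K^♯)⁻¹η, ξ)
    (∀ ξ η : Module.Dual ℝ g, coad (Ksharp.symm ξ) η = - coad (Ksharp.symm η) ξ) ∧
    -- 𝔩₁ 𝔩₂(u, η) = 𝔩₂(u, 𝔩₁ η)
    (∀ (u : g) (η : Module.Dual ℝ g), Ksharp.symm (coad u η) = ⁅u, Ksharp.symm η⁆) ∧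
    -- the mixed Jacobi identity
    (∀ (u v : g) (η : Module.Dual ℝ g),
      coad u (coad v η) - coad v (coad u η) = coad ⁅u, v⁆ η) := by
  obtain rfl : coad = fun u η ↦ ⁅u, η⁆ := by
    funext u η
    ext w
    exact hcoad u w η
  have hK : LinearMap.BilinForm.lieInvariant g K := hK_inv
  have hKsharp' : ∀ u, Ksharp u = K u := fun u ↦ LinearMap.ext (hKsharp u)
  exact ⟨hK.lie_symm_comm hKsharp', hK.symm_lie hKsharp', fun u v η ↦ (lie_lie u v η).symm⟩

/-- For a quadratic Lie algebra `(𝔤, [·,·], K)`, the complex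
`𝔤* --(K^♯)⁻¹--> 𝔤` with `𝔩₂(u+ξ, v+η) = [u,v] + ad*_u η − ad*_v ξ` is a strict Lie
2-algebra (2-term DGLA): the chain conditions
`𝔩₂((K^♯)⁻¹ξ, η) = 𝔩₂(ξ, (K^♯)⁻¹η)` and `(K^♯)⁻¹ 𝔩₂(u,η) = 𝔩₂(u, (K^♯)⁻¹η)` hold,
together with the (mixed) Jacobi identity. -/
theorem quadratic_lie_algebra_gives_strict_lie_2_algebra
    (g : Type) [LieRing g] [LieAlgebra ℝ g]
    (K : g →ₗ[ℝ] g →ₗ[ℝ] ℝ)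
    (hK_symm : ∀ u v : g, K u v = K v u)
    (hK_inv : ∀ u v w : g, K ⁅u, v⁆ w = - K v ⁅u, w⁆)
    -- `K^♯ : 𝔤 → 𝔤*` is an isomorphism induced by the nondegenerate form `K`
    (Ksharp : g ≃ₗ[ℝ] Module.Dual ℝ g)
    (hKsharp : ∀ u v : g, Ksharp u v = K u v)
    -- the coadjoint action
    (coad : g → Module.Dual ℝ g → Module.Dual ℝ g)
    (hcoad : ∀ (u w : g) (η : Module.Dual ℝ g), coad u η w = - η ⁅u, w⁆) :
    -- 𝔩₂(𝔩₁ ξ, η) = 𝔩₂(ξ, 𝔩₁ η), i.e. 𝔩₂((K^♯)⁻¹ξ, η) = − 𝔩₂((K^♯)⁻¹η, ξ)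
    (∀ ξ η : Module.Dual ℝ g, coad (Ksharp.symm ξ) η = - coad (Ksharp.symm η) ξ) ∧
    -- 𝔩₁ 𝔩₂(u, η) = 𝔩₂(u, 𝔩₁ η)
    (∀ (u : g) (η : Module.Dual ℝ g), Ksharp.symm (coad u η) = ⁅u, Ksharp.symm η⁆) ∧
    -- the mixed Jacobi identity
    (∀ (u v : g) (η : Module.Dual ℝ g),
      coad u (coad v η) - coad v (coad u η) = coad ⁅u, v⁆ η) :=
  quadratic_lie_algebra_gives_strict_lie_2_algebra_general g K hK_inv Ksharp hKsharp coad hcoad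
end

section
/- Let (𝔤, [·,·], K) be a quadratic Lie algebra and let (𝔤*[1] ⊕ 𝔤; 𝔩_1, 𝔩_2) be the strict Lie 2-algebra with 𝔩_1 = (K^♯)^{-1} and 𝔩_2(u+ξ, v+η) = [u,v] + ad*_u η − ad*_v ξ. Define the degree-1 graded symmetric bilinear form 𝒮 on 𝔤*[1] ⊕ 𝔤 by 𝒮(u+ξ, v+η) = ⟨ξ,v⟩ + ⟨η,u⟩. Then 𝒮 is invariant: 𝒮(𝔩_1(ξ), η) = 𝒮(ξ, 𝔩_1(η)) for all ξ, η ∈ 𝔤*, and 𝒮(𝔩_2(u,v), η) = −𝒮(v, 𝔩_2(u,η)) for all u, v ∈ 𝔤 and η ∈ 𝔤*. -/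
theorem LinearEquiv.apply_symm_comm_of_symm {R M : Type*} [CommSemiring R] [AddCommMonoid M]
    [Module R M] (Φ : M ≃ₗ[R] Module.Dual R M) (hΦ : ∀ u v : M, Φ u v = Φ v u)
    (ξ η : Module.Dual R M) : η (Φ.symm ξ) = ξ (Φ.symm η) := by
  conv_lhs => rw [← Φ.apply_symm_apply η]
  conv_rhs => rw [← Φ.apply_symm_apply ξ]
  exact hΦ _ _

theorem quadratic_strict_lie_2_algebra_pairing_invariant_general
    (g : Type) [LieRing g] [LieAlgebra ℝ g]
    (K : g →ₗ[ℝ] g →ₗ[ℝ] ℝ)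
    (hK_symm : ∀ u v : g, K u v = K v u)
    (Ksharp : g ≃ₗ[ℝ] Module.Dual ℝ g)
    (hKsharp : ∀ u v : g, Ksharp u v = K u v)
    (coad : g → Module.Dual ℝ g → Module.Dual ℝ g)
    (hcoad : ∀ (u w : g) (η : Module.Dual ℝ g), coad u η w = - η ⁅u, w⁆) :
    -- 𝒮(𝔩₁(ξ), η) = 𝒮(ξ, 𝔩₁(η))
    (∀ ξ η : Module.Dual ℝ g, η (Ksharp.symm ξ) = ξ (Ksharp.symm η)) ∧
    -- 𝒮(𝔩₂(u,v), η) = −𝒮(v, 𝔩₂(u,η))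
    (∀ (u v : g) (η : Module.Dual ℝ g), η ⁅u, v⁆ = - (coad u η) v) := by
  have hKsharp_symm : ∀ u v : g, Ksharp u v = Ksharp v u := fun u v => by
    rw [hKsharp, hKsharp, hK_symm]
  refine ⟨Ksharp.apply_symm_comm_of_symm hKsharp_symm, fun u v η => ?_⟩
  rw [hcoad, neg_neg]

/-- The canonical degree-1 pairing `𝒮(u+ξ, v+η) = ⟨ξ,v⟩ + ⟨η,u⟩` on the strict
Lie 2-algebra `𝔤*[1] ⊕ 𝔤` associated to a quadratic Lie algebra is invariant:
`𝒮(𝔩₁ ξ, η) = 𝒮(ξ, 𝔩₁ η)` and `𝒮(𝔩₂(u,v), η) = −𝒮(v, 𝔩₂(u,η))`. -/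
theorem quadratic_strict_lie_2_algebra_pairing_invariant
    (g : Type) [LieRing g] [LieAlgebra ℝ g]
    (K : g →ₗ[ℝ] g →ₗ[ℝ] ℝ)
    (hK_symm : ∀ u v : g, K u v = K v u)
    (hK_inv : ∀ u v w : g, K ⁅u, v⁆ w = - K v ⁅u, w⁆)
    (Ksharp : g ≃ₗ[ℝ] Module.Dual ℝ g)
    (hKsharp : ∀ u v : g, Ksharp u v = K u v)
    (coad : g → Module.Dual ℝ g → Module.Dual ℝ g)
    (hcoad : ∀ (u w : g) (η : Module.Dual ℝ g), coad u η w = - η ⁅u, w⁆) :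
    -- 𝒮(𝔩₁(ξ), η) = 𝒮(ξ, 𝔩₁(η))
    (∀ ξ η : Module.Dual ℝ g, η (Ksharp.symm ξ) = ξ (Ksharp.symm η)) ∧
    -- 𝒮(𝔩₂(u,v), η) = −𝒮(v, 𝔩₂(u,η))
    (∀ (u v : g) (η : Module.Dual ℝ g), η ⁅u, v⁆ = - (coad u η) v) :=
  quadratic_strict_lie_2_algebra_pairing_invariant_general g K hK_symm Ksharp hKsharp coad hcoad
end

section
/- Let (𝔥*[1] ⊕ 𝔥; 𝔩_1, 𝔩_2, 𝒮) be a quadratic strict Lie 2-algebra, and let A ∈ Ω^1(M, 𝔥), B ∈ Ω^2(M, 𝔥*) be a Γ-connection on a manifold M. Then the 5-form 𝒮(fcurv(A,B), curv(A,B)) is exact; explicitly, 𝒮(fcurv(A,B), curv(A,B)) = d( 𝒮(A, dB) + 𝒮((1/2)𝔩_2(A,A), B) − (1/2)𝒮(𝔩_1(B), B) ), where fcurv(A,B) = dA + (1/2)𝔩_2(A,A) − 𝔩_1(B) and curv(A,B) = dB + 𝔩_2(A,B). -/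
/-- Covariant exterior differential of a `k`-form (modelled as a function on tuples of
vector fields) with respect to a connection-type operator `nab`. -/
def dNab {V E : Type*} [LieRing V] [AddCommGroup E]
    (nab : V → E → E) {k : ℕ} (θ : (Fin k → V) → E) :
    (Fin (k + 1) → V) → E :=
  fun Xs =>
    (∑ i : Fin (k + 1), ((-1 : ℤ) ^ (i : ℕ)) • nab (Xs i) (θ (Xs ∘ i.succAbove)))
      + ∑ i : Fin (k + 1), ∑ j : Fin (k + 1),
          if h : (i : ℕ) < (j : ℕ) then
            ((-1 : ℤ) ^ (j : ℕ)) • θ (Function.update (Xs ∘ j.succAbove)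
              ⟨(i : ℕ), by have hj := j.isLt; omega⟩ ⁅Xs i, Xs j⁆)
          else 0


/-!
Expanding `𝒮(fcurv(A,B), curv(A,B))` bilinearly gives six terms. On the other side, `d` is a
derivation for the pairing `𝒮` (only the compatibility of `𝒮` with the Lie derivatives enters),
`d(dB) = 0` by the Jacobi identity for vector fields, `d(½𝔩₂(A,A)) = 𝔩₂(dA, A)` and
`d(𝔩₁B) = 𝔩₁(dB)`, while invariance of `𝒮` moves brackets across the pairing. So the differential
of the primitive is `𝒮(dA,dB) + 𝒮(dA,𝔩₂(A,B)) + 𝒮(½𝔩₂(A,A),dB) − 𝒮(𝔩₁B,dB)`, and the two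
remaining terms of the expansion vanish: `𝒮(½𝔩₂(A,A), 𝔩₂(A,B)) = 𝒮(𝔩₂(½𝔩₂(A,A), A), B)` is zero
by the Jacobi identity of `𝔩₂`, and `𝒮(𝔩₁B, 𝔩₂(A,B))` is its own negative, by invariance,
`𝔩₁𝔩₂(a,m) = 𝔩₂(a,𝔩₁m)` and the symmetry of `𝒮(𝔩₁·,·)`.
-/

theorem dNab_five {V E : Type*} [LieRing V] [AddCommGroup E] (nab : V → E → E)
    (θ : (Fin 4 → V) → E) (x1 x2 x3 x4 x5 : V) :
    dNab nab θ ![x1, x2, x3, x4, x5] =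
      nab x1 (θ ![x2, x3, x4, x5]) - nab x2 (θ ![x1, x3, x4, x5])
        + nab x3 (θ ![x1, x2, x4, x5]) - nab x4 (θ ![x1, x2, x3, x5])
        + nab x5 (θ ![x1, x2, x3, x4])
      - θ ![⁅x1, x2⁆, x3, x4, x5] + θ ![⁅x1, x3⁆, x2, x4, x5] - θ ![⁅x1, x4⁆, x2, x3, x5]
      + θ ![⁅x1, x5⁆, x2, x3, x4] + θ ![x1, ⁅x2, x3⁆, x4, x5] - θ ![x1, ⁅x2, x4⁆, x3, x5]
      + θ ![x1, ⁅x2, x5⁆, x3, x4] - θ ![x1, x2, ⁅x3, x4⁆, x5] + θ ![x1, x2, ⁅x3, x5⁆, x4]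
      + θ ![x1, x2, x3, ⁅x4, x5⁆] := by
  obtain ⟨ω, rfl⟩ : ∃ ω : V → V → V → V → E, θ = fun Xs => ω (Xs 0) (Xs 1) (Xs 2) (Xs 3) :=
    ⟨fun a b c d => θ ![a, b, c, d], funext fun Xs => congrArg θ (by ext i; fin_cases i <;> rfl)⟩
  simp [dNab, Fin.sum_univ_five, Function.update_apply, Fin.succAbove, sub_eq_add_neg, add_assoc]

section Linearity

variable {K V E : Type*} [CommRing K] [LieRing V] [AddCommGroup E] [Module K E]

theorem dNab_add (nab : V → E →ₗ[K] E) {k : ℕ} (θ₁ θ₂ : (Fin k → V) → E) :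
    dNab (fun X e => nab X e) (θ₁ + θ₂) =
      dNab (fun X e => nab X e) θ₁ + dNab (fun X e => nab X e) θ₂ := by
  funext Xs
  simp only [dNab, Pi.add_apply, map_add, smul_add, Finset.sum_add_distrib]
  rw [add_add_add_comm]
  congr 1
  rw [← Finset.sum_add_distrib]
  refine Finset.sum_congr rfl fun i _ => ?_
  rw [← Finset.sum_add_distrib]
  refine Finset.sum_congr rfl fun j _ => ?_
  split_ifs <;> simp

theorem dNab_smul (nab : V → E →ₗ[K] E) {k : ℕ} (c : K) (θ : (Fin k → V) → E) :
    dNab (fun X e => nab X e) (c • θ) = c • dNab (fun X e => nab X e) θ := by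
  funext Xs
  simp [dNab, Finset.smul_sum, smul_dite, smul_comm c]

end Linearity

section Pairings

variable {K V M N P : Type*} [CommRing K] [AddCommGroup M] [Module K M] [AddCommGroup N]
  [Module K N] [AddCommGroup P] [Module K P]

/-- `pairingkl S` pairs a `k`-form with an `l`-form by the shuffle formula for `𝒮`. -/
def pairing13 (S : M →ₗ[K] N →ₗ[K] P) (α : V → M) (γ : V → V → V → N) (Xs : Fin 4 → V) : P :=
  S (α (Xs 0)) (γ (Xs 1) (Xs 2) (Xs 3)) - S (α (Xs 1)) (γ (Xs 0) (Xs 2) (Xs 3))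
    + S (α (Xs 2)) (γ (Xs 0) (Xs 1) (Xs 3)) - S (α (Xs 3)) (γ (Xs 0) (Xs 1) (Xs 2))

def pairing22 (S : M →ₗ[K] N →ₗ[K] P) (β : V → V → M) (γ : V → V → N) (Xs : Fin 4 → V) : P :=
  S (β (Xs 0) (Xs 1)) (γ (Xs 2) (Xs 3)) - S (β (Xs 0) (Xs 2)) (γ (Xs 1) (Xs 3))
    + S (β (Xs 0) (Xs 3)) (γ (Xs 1) (Xs 2)) + S (β (Xs 1) (Xs 2)) (γ (Xs 0) (Xs 3))
    - S (β (Xs 1) (Xs 3)) (γ (Xs 0) (Xs 2)) + S (β (Xs 2) (Xs 3)) (γ (Xs 0) (Xs 1))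

def pairing14 (S : M →ₗ[K] N →ₗ[K] P) (α : V → M) (δ : V → V → V → V → N)
    (x1 x2 x3 x4 x5 : V) : P :=
  S (α x1) (δ x2 x3 x4 x5) - S (α x2) (δ x1 x3 x4 x5) + S (α x3) (δ x1 x2 x4 x5)
    - S (α x4) (δ x1 x2 x3 x5) + S (α x5) (δ x1 x2 x3 x4)

def pairing23 (S : M →ₗ[K] N →ₗ[K] P) (β : V → V → M) (γ : V → V → V → N)
    (x1 x2 x3 x4 x5 : V) : P :=
  S (β x1 x2) (γ x3 x4 x5) - S (β x1 x3) (γ x2 x4 x5)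
    + S (β x1 x4) (γ x2 x3 x5) - S (β x1 x5) (γ x2 x3 x4)
    + S (β x2 x3) (γ x1 x4 x5) - S (β x2 x4) (γ x1 x3 x5)
    + S (β x2 x5) (γ x1 x3 x4) + S (β x3 x4) (γ x1 x2 x5)
    - S (β x3 x5) (γ x1 x2 x4) + S (β x4 x5) (γ x1 x2 x3)

def pairing32 (S : M →ₗ[K] N →ₗ[K] P) (γ : V → V → V → M) (β : V → V → N)
    (x1 x2 x3 x4 x5 : V) : P :=
  S (γ x1 x2 x3) (β x4 x5) - S (γ x1 x2 x4) (β x3 x5)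
    + S (γ x1 x2 x5) (β x3 x4) + S (γ x1 x3 x4) (β x2 x5)
    - S (γ x1 x3 x5) (β x2 x4) + S (γ x1 x4 x5) (β x2 x3)
    - S (γ x2 x3 x4) (β x1 x5) + S (γ x2 x3 x5) (β x1 x4)
    - S (γ x2 x4 x5) (β x1 x3) + S (γ x3 x4 x5) (β x1 x2)

/-- The 2-form `½ l(α, α)`: for skew `l`, the shuffle formula gives
`½ (l(αX, αY) - l(αY, αX)) = l(αX, αY)`. -/
def halfBracket (l : M →ₗ[K] M →ₗ[K] M) (α : V → M) (X Y : V) : M :=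
  l (α X) (α Y)

def bracket12 (l : M →ₗ[K] N →ₗ[K] N) (α : V → M) (β : V → V → N) (X Y Z : V) : N :=
  l (α X) (β Y Z) - l (α Y) (β X Z) + l (α Z) (β X Y)

def bracket21 (l : M →ₗ[K] M →ₗ[K] M) (β : V → V → M) (α : V → M) (X Y Z : V) : M :=
  l (β X Y) (α Z) - l (β X Z) (α Y) + l (β Y Z) (α X)

theorem pairing23_add_left (S : M →ₗ[K] N →ₗ[K] P) (β β' : V → V → M) (γ : V → V → V → N)
    (x1 x2 x3 x4 x5 : V) :
    pairing23 S (β + β') γ x1 x2 x3 x4 x5 =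
      pairing23 S β γ x1 x2 x3 x4 x5 + pairing23 S β' γ x1 x2 x3 x4 x5 := by
  simp only [pairing23, Pi.add_apply, map_add, LinearMap.add_apply]
  abel

theorem pairing23_sub_left (S : M →ₗ[K] N →ₗ[K] P) (β β' : V → V → M) (γ : V → V → V → N)
    (x1 x2 x3 x4 x5 : V) :
    pairing23 S (β - β') γ x1 x2 x3 x4 x5 =
      pairing23 S β γ x1 x2 x3 x4 x5 - pairing23 S β' γ x1 x2 x3 x4 x5 := by
  simp only [pairing23, Pi.sub_apply, map_sub, LinearMap.sub_apply]
  abel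

theorem pairing23_add_right (S : M →ₗ[K] N →ₗ[K] P) (β : V → V → M) (γ γ' : V → V → V → N)
    (x1 x2 x3 x4 x5 : V) :
    pairing23 S β (γ + γ') x1 x2 x3 x4 x5 =
      pairing23 S β γ x1 x2 x3 x4 x5 + pairing23 S β γ' x1 x2 x3 x4 x5 := by
  simp only [pairing23, Pi.add_apply, map_add]
  abel

theorem pairing32_bracket21 (S : M →ₗ[K] N →ₗ[K] P) (l : M →ₗ[K] M →ₗ[K] M)
    (lm : M →ₗ[K] N →ₗ[K] N) (hl : ∀ a b, l a b = -l b a)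
    (hS : ∀ a b m, S (l a b) m = -S b (lm a m))
    (β : V → V → M) (α : V → M) (γ : V → V → N) (x1 x2 x3 x4 x5 : V) :
    pairing32 S (bracket21 l β α) γ x1 x2 x3 x4 x5
      = pairing23 S β (bracket12 lm α γ) x1 x2 x3 x4 x5 := by
  simp only [pairing32, pairing23, bracket21, bracket12, hl (β _ _), hS, map_add, map_sub,
    map_neg, LinearMap.add_apply, LinearMap.sub_apply, LinearMap.neg_apply]
  abel

theorem bracket21_halfBracket_self_eq_zero (l : M →ₗ[K] M →ₗ[K] M) (hl : ∀ a b, l a b = -l b a)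
    (hjac : ∀ a b c, l a (l b c) = l (l a b) c + l b (l a c)) (α : V → M) :
    bracket21 l (halfBracket l α) α = 0 := by
  funext X Y Z
  simp only [bracket21, halfBracket, Pi.zero_apply]
  rw [hl (l (α X) (α Z)), hl (l (α Y) (α Z)), hjac (α X) (α Y) (α Z)]
  abel

theorem pairing23_halfBracket_bracket12_eq_zero (S : M →ₗ[K] N →ₗ[K] P)
    (l : M →ₗ[K] M →ₗ[K] M) (lm : M →ₗ[K] N →ₗ[K] N) (hl : ∀ a b, l a b = -l b a)
    (hjac : ∀ a b c, l a (l b c) = l (l a b) c + l b (l a c))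
    (hS : ∀ a b m, S (l a b) m = -S b (lm a m)) (α : V → M) (γ : V → V → N)
    (x1 x2 x3 x4 x5 : V) :
    pairing23 S (halfBracket l α) (bracket12 lm α γ) x1 x2 x3 x4 x5 = 0 := by
  rw [← pairing32_bracket21 S l lm hl hS, bracket21_halfBracket_self_eq_zero l hl hjac]
  simp [pairing32]

theorem pairing32_comp (S : M →ₗ[K] N →ₗ[K] P) (f : N →ₗ[K] M)
    (hS : ∀ m p, S (f m) p = S (f p) m) (γ : V → V → V → N) (β : V → V → N)
    (x1 x2 x3 x4 x5 : V) :
    pairing32 S (fun X Y Z => f (γ X Y Z)) β x1 x2 x3 x4 x5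
      = pairing23 S (fun X Y => f (β X Y)) γ x1 x2 x3 x4 x5 := by
  simp only [pairing32, pairing23, hS (γ _ _ _)]
  abel

theorem bracket21_comp (l : M →ₗ[K] M →ₗ[K] M) (lm : M →ₗ[K] N →ₗ[K] N) (f : N →ₗ[K] M)
    (hl : ∀ a b, l a b = -l b a) (hf : ∀ a m, f (lm a m) = l a (f m))
    (β : V → V → N) (α : V → M) :
    bracket21 l (fun X Y => f (β X Y)) α = fun X Y Z => -f (bracket12 lm α β X Y Z) := by
  funext X Y Z
  simp only [bracket21, bracket12, hl (f _), hf, map_add, map_sub]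
  abel

theorem pairing23_comp_bracket12_eq_zero [Invertible (2 : K)] (S : M →ₗ[K] N →ₗ[K] P)
    (l : M →ₗ[K] M →ₗ[K] M) (lm : M →ₗ[K] N →ₗ[K] N) (f : N →ₗ[K] M)
    (hl : ∀ a b, l a b = -l b a) (hS : ∀ a b m, S (l a b) m = -S b (lm a m))
    (hf : ∀ a m, f (lm a m) = l a (f m)) (hSf : ∀ m p, S (f m) p = S (f p) m)
    (α : V → M) (β : V → V → N) (x1 x2 x3 x4 x5 : V) :
    pairing23 S (fun X Y => f (β X Y)) (bracket12 lm α β) x1 x2 x3 x4 x5 = 0 := by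
  set ω := pairing23 S (fun X Y => f (β X Y)) (bracket12 lm α β) x1 x2 x3 x4 x5
  have hω : ω = -ω := calc
    ω = pairing32 S (bracket21 l (fun X Y => f (β X Y)) α) β x1 x2 x3 x4 x5 :=
      (pairing32_bracket21 S l lm hl hS _ α β _ _ _ _ _).symm
    _ = -pairing32 S (fun X Y Z => f (bracket12 lm α β X Y Z)) β x1 x2 x3 x4 x5 := by
      rw [bracket21_comp l lm f hl hf]
      simp only [pairing32, map_neg, LinearMap.neg_apply]
      abel
    _ = -ω := by rw [pairing32_comp S f hSf]
  have h2ω : (2 : K) • ω = 0 := by rw [two_smul]; nth_rw 2 [hω]; exact add_neg_cancel ω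
  calc ω = (⅟2 * 2 : K) • ω := by rw [invOf_mul_self, one_smul]
    _ = 0 := by rw [mul_smul, h2ω, smul_zero]

end Pairings

section ExteriorDerivative

variable {K V M N P : Type*} [CommRing K] [LieRing V] [AddCommGroup M] [Module K M]
  [AddCommGroup N] [Module K N] [AddCommGroup P] [Module K P]

/-! `dNab` in degrees 1, 2, 3 on curried forms, with `⁅Xᵢ, Xⱼ⁆` (`i < j`) in the slot of `Xᵢ`
as in `dNab`. With this placement the Leibniz rules and `d ∘ d = 0` below need no alternation of
the forms. -/

def extDeriv1 (L : V → M →ₗ[K] M) (α : V → M) (X Y : V) : M :=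
  L X (α Y) - L Y (α X) - α ⁅X, Y⁆

def extDeriv2 (L : V → M →ₗ[K] M) (β : V → V → M) (X Y Z : V) : M :=
  L X (β Y Z) - L Y (β X Z) + L Z (β X Y) - β ⁅X, Y⁆ Z + β ⁅X, Z⁆ Y + β X ⁅Y, Z⁆

def extDeriv3 (L : V → M →ₗ[K] M) (γ : V → V → V → M) (X Y Z W : V) : M :=
  L X (γ Y Z W) - L Y (γ X Z W) + L Z (γ X Y W) - L W (γ X Y Z)
    - γ ⁅X, Y⁆ Z W + γ ⁅X, Z⁆ Y W - γ ⁅X, W⁆ Y Z + γ X ⁅Y, Z⁆ W - γ X ⁅Y, W⁆ Z - γ X Y ⁅Z, W⁆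

theorem extDeriv3_extDeriv2 [Module K V] (L : V → M →ₗ[K] M)
    (hL : ∀ (X Y : V) (m : M), L ⁅X, Y⁆ m = L X (L Y m) - L Y (L X m))
    (β : V →ₗ[K] V →ₗ[K] M) :
    extDeriv3 L (extDeriv2 L fun X Y => β X Y) = 0 := by
  have jacobi : ∀ X Y Z : V, ⁅X, ⁅Y, Z⁆⁆ = ⁅⁅X, Y⁆, Z⁆ - ⁅⁅X, Z⁆, Y⁆ := fun X Y Z => by
    rw [leibniz_lie, ← lie_skew Y ⁅X, Z⁆, ← sub_eq_add_neg]
  funext X Y Z W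
  simp only [extDeriv3, extDeriv2, hL, jacobi, map_add, map_sub, LinearMap.sub_apply,
    Pi.zero_apply]
  module

theorem extDeriv2_halfBracket (L : V → M →ₗ[K] M) (l : M →ₗ[K] M →ₗ[K] M)
    (hl : ∀ a b, l a b = -l b a) (hL : ∀ X a b, L X (l a b) = l (L X a) b + l a (L X b))
    (α : V → M) :
    extDeriv2 L (halfBracket l α) = bracket21 l (extDeriv1 L α) α := by
  funext X Y Z
  simp only [extDeriv2, halfBracket, bracket21, extDeriv1, hL, hl _ (L _ _), hl _ (α ⁅_, _⁆),
    map_sub, LinearMap.sub_apply]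
  abel

theorem extDeriv2_comp (L₀ : V → M →ₗ[K] M) (L₁ : V → N →ₗ[K] N) (f : N →ₗ[K] M)
    (hf : ∀ X m, L₀ X (f m) = f (L₁ X m)) (β : V → V → N) :
    extDeriv2 L₀ (fun X Y => f (β X Y)) = fun X Y Z => f (extDeriv2 L₁ β X Y Z) := by
  funext X Y Z
  simp only [extDeriv2, hf, map_add, map_sub]

theorem dNab_pairing13 (act : V → P →ₗ[K] P) (L₀ : V → M →ₗ[K] M) (L₁ : V → N →ₗ[K] N)
    (S : M →ₗ[K] N →ₗ[K] P) (hSL : ∀ X a m, act X (S a m) = S (L₀ X a) m + S a (L₁ X m))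
    (α : V → M) (γ : V → V → V → N) (x1 x2 x3 x4 x5 : V) :
    dNab (fun X f => act X f) (pairing13 S α γ) ![x1, x2, x3, x4, x5] =
      pairing23 S (extDeriv1 L₀ α) γ x1 x2 x3 x4 x5
        - pairing14 S α (extDeriv3 L₁ γ) x1 x2 x3 x4 x5 := by
  rw [dNab_five]
  simp only [pairing13, pairing23, pairing14, extDeriv1, extDeriv3, Matrix.cons_val, hSL,
    map_add, map_sub, LinearMap.sub_apply]
  abel

theorem dNab_pairing22 (act : V → P →ₗ[K] P) (L₀ : V → M →ₗ[K] M) (L₁ : V → N →ₗ[K] N)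
    (S : M →ₗ[K] N →ₗ[K] P) (hSL : ∀ X a m, act X (S a m) = S (L₀ X a) m + S a (L₁ X m))
    (β : V → V → M) (γ : V → V → N) (x1 x2 x3 x4 x5 : V) :
    dNab (fun X f => act X f) (pairing22 S β γ) ![x1, x2, x3, x4, x5] =
      pairing32 S (extDeriv2 L₀ β) γ x1 x2 x3 x4 x5
        + pairing23 S β (extDeriv2 L₁ γ) x1 x2 x3 x4 x5 := by
  rw [dNab_five]
  simp only [pairing22, pairing32, pairing23, extDeriv2, Matrix.cons_val, hSL,
    map_add, map_sub, LinearMap.add_apply, LinearMap.sub_apply]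
  abel

end ExteriorDerivative

theorem first_pontryagin_form_of_connection_is_exact_general
    (V R H0 H1 : Type) [LieRing V] [Module ℝ V]
    [AddCommGroup R] [Module ℝ R]
    [AddCommGroup H0] [Module ℝ H0] [AddCommGroup H1] [Module ℝ H1]
    -- vector fields act on functions
    (act : V → R →ₗ[ℝ] R)
    -- Lie derivatives on 𝔥- and 𝔥*-valued functions
    (L0 : V → H0 →ₗ[ℝ] H0) (L1 : V → H1 →ₗ[ℝ] H1)
    (hL1 : ∀ (X Y : V) (m : H1), L1 ⁅X, Y⁆ m = L1 X (L1 Y m) - L1 Y (L1 X m))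
    -- the quadratic strict Lie 2-algebra structure (𝔥*[1] ⊕ 𝔥; 𝔩₁, 𝔩₂, 𝒮)
    (l1 : H1 →ₗ[ℝ] H0) (l2 : H0 →ₗ[ℝ] H0 →ₗ[ℝ] H0) (l2m : H0 →ₗ[ℝ] H1 →ₗ[ℝ] H1)
    (hl2skew : ∀ a b : H0, l2 a b = - l2 b a)
    (hchain1 : ∀ (a : H0) (m : H1), l1 (l2m a m) = l2 a (l1 m))
    (hjac0 : ∀ a b c : H0, l2 a (l2 b c) = l2 (l2 a b) c + l2 b (l2 a c))
    (hder0 : ∀ (X : V) (a b : H0), L0 X (l2 a b) = l2 (L0 X a) b + l2 a (L0 X b))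
    (hcomm : ∀ (X : V) (m : H1), L0 X (l1 m) = l1 (L1 X m))
    -- the invariant pairing 𝒮
    (S : H0 →ₗ[ℝ] H1 →ₗ[ℝ] R)
    (hSL : ∀ (X : V) (a : H0) (m : H1),
      act X (S a m) = S (L0 X a) m + S a (L1 X m))
    (hSl1 : ∀ m p : H1, S (l1 m) p = S (l1 p) m)
    (hSinv : ∀ (a b : H0) (m : H1), S (l2 a b) m = - S b (l2m a m))
    -- the Γ-connection (A, B)
    (A : V →ₗ[ℝ] H0) (B : V →ₗ[ℝ] V →ₗ[ℝ] H1)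
    (hBskew : ∀ X Y : V, B X Y = - B Y X)
    -- dB
    (dB : V → V → V → H1)
    (hdB : ∀ X Y Z : V, dB X Y Z =
      L1 X (B Y Z) - L1 Y (B X Z) + L1 Z (B X Y)
        - B ⁅X, Y⁆ Z + B ⁅X, Z⁆ Y - B ⁅Y, Z⁆ X)
    -- fcurv(A,B) = dA + (1/2)𝔩₂(A,A) − 𝔩₁(B)
    (Fc : V → V → H0)
    (hFc : ∀ X Y : V, Fc X Y =
      L0 X (A Y) - L0 Y (A X) - A ⁅X, Y⁆ + l2 (A X) (A Y) - l1 (B X Y))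
    -- curv(A,B) = dB + 𝔩₂(A,B)
    (Cv : V → V → V → H1)
    (hCv : ∀ X Y Z : V, Cv X Y Z =
      dB X Y Z + l2m (A X) (B Y Z) - l2m (A Y) (B X Z) + l2m (A Z) (B X Y))
    -- the primitive 4-form 𝒮(A, dB) + 𝒮((1/2)𝔩₂(A,A), B) − (1/2)𝒮(𝔩₁(B), B)
    (P4 : (Fin 4 → V) → R)
    (hP4 : ∀ Xs : Fin 4 → V, P4 Xs =
      (S (A (Xs 0)) (dB (Xs 1) (Xs 2) (Xs 3)) - S (A (Xs 1)) (dB (Xs 0) (Xs 2) (Xs 3))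
        + S (A (Xs 2)) (dB (Xs 0) (Xs 1) (Xs 3)) - S (A (Xs 3)) (dB (Xs 0) (Xs 1) (Xs 2)))
      + (S (l2 (A (Xs 0)) (A (Xs 1))) (B (Xs 2) (Xs 3))
          - S (l2 (A (Xs 0)) (A (Xs 2))) (B (Xs 1) (Xs 3))
          + S (l2 (A (Xs 0)) (A (Xs 3))) (B (Xs 1) (Xs 2))
          + S (l2 (A (Xs 1)) (A (Xs 2))) (B (Xs 0) (Xs 3))
          - S (l2 (A (Xs 1)) (A (Xs 3))) (B (Xs 0) (Xs 2))
          + S (l2 (A (Xs 2)) (A (Xs 3))) (B (Xs 0) (Xs 1)))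
      - ((1 : ℝ) / 2) •
          (S (l1 (B (Xs 0) (Xs 1))) (B (Xs 2) (Xs 3))
            - S (l1 (B (Xs 0) (Xs 2))) (B (Xs 1) (Xs 3))
            + S (l1 (B (Xs 0) (Xs 3))) (B (Xs 1) (Xs 2))
            + S (l1 (B (Xs 1) (Xs 2))) (B (Xs 0) (Xs 3))
            - S (l1 (B (Xs 1) (Xs 3))) (B (Xs 0) (Xs 2))
            + S (l1 (B (Xs 2) (Xs 3))) (B (Xs 0) (Xs 1)))) :
    -- 𝒮(fcurv, curv) = d(𝒮(A,dB) + 𝒮((1/2)𝔩₂(A,A),B) − (1/2)𝒮(𝔩₁(B),B))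
    ∀ x1 x2 x3 x4 x5 : V,
      S (Fc x1 x2) (Cv x3 x4 x5) - S (Fc x1 x3) (Cv x2 x4 x5)
        + S (Fc x1 x4) (Cv x2 x3 x5) - S (Fc x1 x5) (Cv x2 x3 x4)
        + S (Fc x2 x3) (Cv x1 x4 x5) - S (Fc x2 x4) (Cv x1 x3 x5)
        + S (Fc x2 x5) (Cv x1 x3 x4) + S (Fc x3 x4) (Cv x1 x2 x5)
        - S (Fc x3 x5) (Cv x1 x2 x4) + S (Fc x4 x5) (Cv x1 x2 x3)
      = dNab (fun X f => act X f) P4 ![x1, x2, x3, x4, x5] := by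
  intro x1 x2 x3 x4 x5
  have hdB' : dB = extDeriv2 L1 fun X Y => B X Y := by
    funext X Y Z
    rw [hdB, extDeriv2, hBskew ⁅Y, Z⁆ X, sub_neg_eq_add]
  have hFc' : Fc = extDeriv1 L0 A + halfBracket l2 A - fun X Y => l1 (B X Y) :=
    funext fun X => funext (hFc X)
  have hCv' : Cv = extDeriv2 L1 (fun X Y => B X Y) + bracket12 l2m A fun X Y => B X Y := by
    funext X Y Z
    rw [hCv, hdB', Pi.add_apply, Pi.add_apply, Pi.add_apply, bracket12]
    abel
  have hP4' : P4 = pairing13 S A (extDeriv2 L1 fun X Y => B X Y)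
      + pairing22 S (halfBracket l2 A) (fun X Y => B X Y)
      + (-1 / 2 : ℝ) • pairing22 S (fun X Y => l1 (B X Y)) fun X Y => B X Y := by
    funext Xs
    rw [hP4, ← hdB']
    simp only [Pi.add_apply, Pi.smul_apply, pairing13, pairing22, halfBracket]
    module
  show pairing23 S Fc Cv x1 x2 x3 x4 x5 = _
  rw [hFc', hCv', hP4', dNab_add, dNab_add, dNab_smul]
  simp only [Pi.add_apply, Pi.smul_apply, pairing23_add_left, pairing23_sub_left,
    pairing23_add_right, dNab_pairing13 act L0 L1 S hSL, dNab_pairing22 act L0 L1 S hSL,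
    extDeriv3_extDeriv2 L1 hL1 B, extDeriv2_halfBracket L0 l2 hl2skew hder0,
    pairing32_bracket21 S l2 l2m hl2skew hSinv, extDeriv2_comp L0 L1 l1 hcomm,
    pairing32_comp S l1 hSl1,
    pairing23_halfBracket_bracket12_eq_zero S l2 l2m hl2skew hjac0 hSinv,
    pairing23_comp_bracket12_eq_zero S l2 l2m l1 hl2skew hSinv hchain1 hSl1,
    pairing14, Pi.zero_apply, map_zero, sub_zero]
  module

/-- for a `Γ`-connection `(A,B)` with values in a quadratic strict Lie
2-algebra, the 5-form `𝒮(fcurv(A,B), curv(A,B))` is exact, with explicit primitive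
`𝒮(A, dB) + 𝒮((1/2)𝔩₂(A,A), B) − (1/2)𝒮(𝔩₁(B), B)`. -/
theorem first_pontryagin_form_of_connection_is_exact
    (V R H0 H1 : Type) [LieRing V] [Module ℝ V]
    [AddCommGroup R] [Module ℝ R]
    [AddCommGroup H0] [Module ℝ H0] [AddCommGroup H1] [Module ℝ H1]
    -- vector fields act on functions
    (act : V → R →ₗ[ℝ] R)
    (hact : ∀ (X Y : V) (f : R), act ⁅X, Y⁆ f = act X (act Y f) - act Y (act X f))
    -- Lie derivatives on 𝔥- and 𝔥*-valued functions
    (L0 : V → H0 →ₗ[ℝ] H0) (L1 : V → H1 →ₗ[ℝ] H1)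
    (hL0 : ∀ (X Y : V) (a : H0), L0 ⁅X, Y⁆ a = L0 X (L0 Y a) - L0 Y (L0 X a))
    (hL1 : ∀ (X Y : V) (m : H1), L1 ⁅X, Y⁆ m = L1 X (L1 Y m) - L1 Y (L1 X m))
    -- the quadratic strict Lie 2-algebra structure (𝔥*[1] ⊕ 𝔥; 𝔩₁, 𝔩₂, 𝒮)
    (l1 : H1 →ₗ[ℝ] H0) (l2 : H0 →ₗ[ℝ] H0 →ₗ[ℝ] H0) (l2m : H0 →ₗ[ℝ] H1 →ₗ[ℝ] H1)
    (hl2skew : ∀ a b : H0, l2 a b = - l2 b a)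
    (hchain1 : ∀ (a : H0) (m : H1), l1 (l2m a m) = l2 a (l1 m))
    (hchain2 : ∀ m p : H1, l2m (l1 m) p = - l2m (l1 p) m)
    (hjac0 : ∀ a b c : H0, l2 a (l2 b c) = l2 (l2 a b) c + l2 b (l2 a c))
    (hjacm : ∀ (a b : H0) (m : H1), l2m a (l2m b m) = l2m (l2 a b) m + l2m b (l2m a m))
    (hder0 : ∀ (X : V) (a b : H0), L0 X (l2 a b) = l2 (L0 X a) b + l2 a (L0 X b))
    (hder1 : ∀ (X : V) (a : H0) (m : H1), L1 X (l2m a m) = l2m (L0 X a) m + l2m a (L1 X m))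
    (hcomm : ∀ (X : V) (m : H1), L0 X (l1 m) = l1 (L1 X m))
    -- the invariant pairing 𝒮
    (S : H0 →ₗ[ℝ] H1 →ₗ[ℝ] R)
    (hSL : ∀ (X : V) (a : H0) (m : H1),
      act X (S a m) = S (L0 X a) m + S a (L1 X m))
    (hSl1 : ∀ m p : H1, S (l1 m) p = S (l1 p) m)
    (hSinv : ∀ (a b : H0) (m : H1), S (l2 a b) m = - S b (l2m a m))
    -- the Γ-connection (A, B)
    (A : V →ₗ[ℝ] H0) (B : V →ₗ[ℝ] V →ₗ[ℝ] H1)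
    (hBskew : ∀ X Y : V, B X Y = - B Y X)
    -- dB
    (dB : V → V → V → H1)
    (hdB : ∀ X Y Z : V, dB X Y Z =
      L1 X (B Y Z) - L1 Y (B X Z) + L1 Z (B X Y)
        - B ⁅X, Y⁆ Z + B ⁅X, Z⁆ Y - B ⁅Y, Z⁆ X)
    -- fcurv(A,B) = dA + (1/2)𝔩₂(A,A) − 𝔩₁(B)
    (Fc : V → V → H0)
    (hFc : ∀ X Y : V, Fc X Y =
      L0 X (A Y) - L0 Y (A X) - A ⁅X, Y⁆ + l2 (A X) (A Y) - l1 (B X Y))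
    -- curv(A,B) = dB + 𝔩₂(A,B)
    (Cv : V → V → V → H1)
    (hCv : ∀ X Y Z : V, Cv X Y Z =
      dB X Y Z + l2m (A X) (B Y Z) - l2m (A Y) (B X Z) + l2m (A Z) (B X Y))
    -- the primitive 4-form 𝒮(A, dB) + 𝒮((1/2)𝔩₂(A,A), B) − (1/2)𝒮(𝔩₁(B), B)
    (P4 : (Fin 4 → V) → R)
    (hP4 : ∀ Xs : Fin 4 → V, P4 Xs =
      (S (A (Xs 0)) (dB (Xs 1) (Xs 2) (Xs 3)) - S (A (Xs 1)) (dB (Xs 0) (Xs 2) (Xs 3))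
        + S (A (Xs 2)) (dB (Xs 0) (Xs 1) (Xs 3)) - S (A (Xs 3)) (dB (Xs 0) (Xs 1) (Xs 2)))
      + (S (l2 (A (Xs 0)) (A (Xs 1))) (B (Xs 2) (Xs 3))
          - S (l2 (A (Xs 0)) (A (Xs 2))) (B (Xs 1) (Xs 3))
          + S (l2 (A (Xs 0)) (A (Xs 3))) (B (Xs 1) (Xs 2))
          + S (l2 (A (Xs 1)) (A (Xs 2))) (B (Xs 0) (Xs 3))
          - S (l2 (A (Xs 1)) (A (Xs 3))) (B (Xs 0) (Xs 2))
          + S (l2 (A (Xs 2)) (A (Xs 3))) (B (Xs 0) (Xs 1)))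
      - ((1 : ℝ) / 2) •
          (S (l1 (B (Xs 0) (Xs 1))) (B (Xs 2) (Xs 3))
            - S (l1 (B (Xs 0) (Xs 2))) (B (Xs 1) (Xs 3))
            + S (l1 (B (Xs 0) (Xs 3))) (B (Xs 1) (Xs 2))
            + S (l1 (B (Xs 1) (Xs 2))) (B (Xs 0) (Xs 3))
            - S (l1 (B (Xs 1) (Xs 3))) (B (Xs 0) (Xs 2))
            + S (l1 (B (Xs 2) (Xs 3))) (B (Xs 0) (Xs 1)))) :
    -- 𝒮(fcurv, curv) = d(𝒮(A,dB) + 𝒮((1/2)𝔩₂(A,A),B) − (1/2)𝒮(𝔩₁(B),B))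
    ∀ x1 x2 x3 x4 x5 : V,
      S (Fc x1 x2) (Cv x3 x4 x5) - S (Fc x1 x3) (Cv x2 x4 x5)
        + S (Fc x1 x4) (Cv x2 x3 x5) - S (Fc x1 x5) (Cv x2 x3 x4)
        + S (Fc x2 x3) (Cv x1 x4 x5) - S (Fc x2 x4) (Cv x1 x3 x5)
        + S (Fc x2 x5) (Cv x1 x3 x4) + S (Fc x3 x4) (Cv x1 x2 x5)
        - S (Fc x3 x5) (Cv x1 x2 x4) + S (Fc x4 x5) (Cv x1 x2 x3)
      = dNab (fun X f => act X f) P4 ![x1, x2, x3, x4, x5] :=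
  first_pontryagin_form_of_connection_is_exact_general V R H0 H1 act L0 L1 hL1 l1 l2 l2m hl2skew
    hchain1 hjac0 hder0 hcomm S hSL hSl1 hSinv A B hBskew dB hdB Fc hFc Cv hCv P4 hP4
end

section
/- Let (g, φ) be a gauge transformation between Γ-connections (A,B) and (A',B') on M, i.e. A' = Ad_g A − g*θ̄ − 𝔩_1(φ) and B' = (Φ_g)_* B − dφ + (1/2)𝔩_2(𝔩_1(φ),φ) − 𝔩_2(Ad_g A, φ) + 𝔩_2(g*θ̄, φ). Then the fake curvature transforms by the adjoint action: fcurv(A',B') = Ad_g fcurv(A,B). -/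
/-!
Write `A' = Ad_g A − θ − 𝔩₁φ` with `θ = g*θ̄`. Differentiating, `d(Ad_g A)` produces `Ad_g dA` plus
the two brackets of `θ` with `Ad_g A`, the Maurer–Cartan equation turns `dθ` into `𝔩₂(θ,θ)`, and
`d(𝔩₁φ) = 𝔩₁(dφ)` cancels against the `dφ` in `B'`. The remaining cross terms of `𝔩₂(A',A')`
are cancelled, by skew-symmetry of `𝔩₂` and `𝔩₁ 𝔩₂(ξ,η) = 𝔩₂(ξ, 𝔩₁η)`, by these brackets and by
`𝔩₁` of the correction terms of `B'`; what is left is `Ad_g` applied to `fcurv(A,B)`.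
-/

section ExtDeriv

variable {R V H H' : Type*} [CommRing R] [LieRing V]
  [AddCommGroup H] [Module R H] [AddCommGroup H'] [Module R H']

/-- The exterior derivative of a one-form `α` with values in `H`, evaluated on vector fields, where
`L X` is differentiation along `X`. -/
def extDeriv₁ (L : V → H →ₗ[R] H) (α : V → H) (X Y : V) : H :=
  L X (α Y) - L Y (α X) - α ⁅X, Y⁆

theorem extDeriv₁_sub (L : V → H →ₗ[R] H) (α β : V → H) (X Y : V) :
    extDeriv₁ L (fun Z => α Z - β Z) X Y = extDeriv₁ L α X Y - extDeriv₁ L β X Y := by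
  simp only [extDeriv₁, map_sub]
  abel

theorem extDeriv₁_comp_of_commute (L : V → H →ₗ[R] H) (L' : V → H' →ₗ[R] H') (T : H →ₗ[R] H')
    (hT : ∀ (X : V) (h : H), L' X (T h) = T (L X h)) (α : V → H) (X Y : V) :
    extDeriv₁ L' (fun Z => T (α Z)) X Y = T (extDeriv₁ L α X Y) := by
  simp only [extDeriv₁, hT, map_sub]

theorem extDeriv₁_comp_of_twisted_commute (L ρ : V → H →ₗ[R] H) (T : H →ₗ[R] H)
    (hT : ∀ (X : V) (h : H), L X (T h) = T (L X h) + ρ X (T h)) (α : V → H) (X Y : V) :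
    extDeriv₁ L (fun Z => T (α Z)) X Y =
      T (extDeriv₁ L α X Y) + ρ X (T (α Y)) - ρ Y (T (α X)) := by
  simp only [extDeriv₁, hT, map_sub]
  abel

end ExtDeriv

/-- `AdA` models `Ad_g`, `Φg` models `(Φ_g)_*`, `θg` models the pullback `g*θ̄` of the Maurer–Cartan
form, and `φ ∈ Ω¹(M,𝔥₁)`. -/
theorem gauge_transformation_fake_curvature_general
    (V H0 H1 : Type) [LieRing V] [Module ℝ V]
    [AddCommGroup H0] [Module ℝ H0] [AddCommGroup H1] [Module ℝ H1]
    (L0 : V → H0 →ₗ[ℝ] H0) (L1 : V → H1 →ₗ[ℝ] H1)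
    (l1 : H1 →ₗ[ℝ] H0) (l2 : H0 →ₗ[ℝ] H0 →ₗ[ℝ] H0) (l2m : H0 →ₗ[ℝ] H1 →ₗ[ℝ] H1)
    (hl2skew : ∀ a b : H0, l2 a b = - l2 b a)
    (hchain1 : ∀ (a : H0) (m : H1), l1 (l2m a m) = l2 a (l1 m))
    (hcomm : ∀ (X : V) (m : H1), L0 X (l1 m) = l1 (L1 X m))
    -- the Γ-connection (A,B) and the gauge transformation data (g, φ)
    (A : V →ₗ[ℝ] H0) (B : V →ₗ[ℝ] V →ₗ[ℝ] H1)
    (AdA : H0 →ₗ[ℝ] H0) (Φg : H1 →ₗ[ℝ] H1) (θg : V →ₗ[ℝ] H0) (φ : V →ₗ[ℝ] H1)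
    -- Maurer–Cartan equation for the (pulled back) Maurer–Cartan form
    (hMC : ∀ X Y : V, L0 X (θg Y) - L0 Y (θg X) - θg ⁅X, Y⁆ = l2 (θg X) (θg Y))
    -- d(Ad_g a) = Ad_g (d a) + 𝔩₂(g*θ̄, Ad_g a)
    (hdAd : ∀ (X : V) (a : H0), L0 X (AdA a) = AdA (L0 X a) + l2 (θg X) (AdA a))
    -- Ad_g is a Lie algebra morphism
    (hAdhom : ∀ a b : H0, AdA (l2 a b) = l2 (AdA a) (AdA b))
    -- equivariance 𝔩₁ ∘ (Φ_g)_* = Ad_g ∘ 𝔩₁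
    (hequiv : ∀ m : H1, l1 (Φg m) = AdA (l1 m))
    -- the gauge transformed connection (A', B')
    (A' : V → H0)
    (hA' : ∀ X : V, A' X = AdA (A X) - θg X - l1 (φ X))
    (B' : V → V → H1)
    (hB' : ∀ X Y : V, B' X Y =
      Φg (B X Y) - (L1 X (φ Y) - L1 Y (φ X) - φ ⁅X, Y⁆)
        + l2m (l1 (φ X)) (φ Y)
        - (l2m (AdA (A X)) (φ Y) - l2m (AdA (A Y)) (φ X))
        + (l2m (θg X) (φ Y) - l2m (θg Y) (φ X)))
    -- the fake curvatures
    (Fc : V → V → H0)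
    (hFc : ∀ X Y : V, Fc X Y =
      L0 X (A Y) - L0 Y (A X) - A ⁅X, Y⁆ + l2 (A X) (A Y) - l1 (B X Y))
    (Fc' : V → V → H0)
    (hFc' : ∀ X Y : V, Fc' X Y =
      L0 X (A' Y) - L0 Y (A' X) - A' ⁅X, Y⁆ + l2 (A' X) (A' Y) - l1 (B' X Y)) :
    ∀ X Y : V, Fc' X Y = AdA (Fc X Y) := by
  intro X Y
  have hdθ : extDeriv₁ L0 θg X Y = l2 (θg X) (θg Y) := hMC X Y
  have hdA' : extDeriv₁ L0 A' X Y = AdA (extDeriv₁ L0 A X Y) + l2 (θg X) (AdA (A Y))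
      - l2 (θg Y) (AdA (A X)) - l2 (θg X) (θg Y) - l1 (extDeriv₁ L1 φ X Y) := by
    rw [funext hA', extDeriv₁_sub, extDeriv₁_sub, extDeriv₁_comp_of_twisted_commute L0 _ AdA hdAd,
      extDeriv₁_comp_of_commute L1 L0 l1 hcomm, hdθ]
  have hl1B' : l1 (B' X Y) = AdA (l1 (B X Y)) - l1 (extDeriv₁ L1 φ X Y)
      + l2 (l1 (φ X)) (l1 (φ Y)) - (l2 (AdA (A X)) (l1 (φ Y)) - l2 (AdA (A Y)) (l1 (φ X)))
      + (l2 (θg X) (l1 (φ Y)) - l2 (θg Y) (l1 (φ X))) := by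
    have hB'XY : B' X Y = Φg (B X Y) - extDeriv₁ L1 φ X Y + l2m (l1 (φ X)) (φ Y)
        - (l2m (AdA (A X)) (φ Y) - l2m (AdA (A Y)) (φ X))
        + (l2m (θg X) (φ Y) - l2m (θg Y) (φ X)) := hB' X Y
    simp only [hB'XY, map_add, map_sub, hchain1, hequiv]
  have hFc'X : Fc' X Y = extDeriv₁ L0 A' X Y + l2 (A' X) (A' Y) - l1 (B' X Y) := hFc' X Y
  have hFcX : Fc X Y = extDeriv₁ L0 A X Y + l2 (A X) (A Y) - l1 (B X Y) := hFc X Y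
  rw [hFc'X, hdA', hl1B', hA' X, hA' Y, hFcX]
  simp only [map_sub, map_add, LinearMap.sub_apply, hAdhom]
  -- the cross terms of `𝔩₂(A', A')` cancel only after reordering these three brackets
  rw [hl2skew (θg Y) (AdA (A X)), hl2skew (l1 (φ X)) (AdA (A Y)), hl2skew (l1 (φ X)) (θg Y)]
  abel

/-- under a gauge transformation `(g, φ)` between `Γ`-connections `(A,B)` and
`(A',B')`, the fake curvature transforms by the adjoint action:
`fcurv(A',B') = Ad_g fcurv(A,B)`.  Here `AdA` models `Ad_g`, `Φg` models `(Φ_g)_*`,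
`θg` models the pullback `g*θ̄` of the Maurer–Cartan form, and `φ ∈ Ω¹(M,𝔥₁)`. -/
theorem gauge_transformation_fake_curvature
    (V H0 H1 : Type) [LieRing V] [Module ℝ V]
    [AddCommGroup H0] [Module ℝ H0] [AddCommGroup H1] [Module ℝ H1]
    (L0 : V → H0 →ₗ[ℝ] H0) (L1 : V → H1 →ₗ[ℝ] H1)
    (hL0 : ∀ (X Y : V) (a : H0), L0 ⁅X, Y⁆ a = L0 X (L0 Y a) - L0 Y (L0 X a))
    (hL1 : ∀ (X Y : V) (m : H1), L1 ⁅X, Y⁆ m = L1 X (L1 Y m) - L1 Y (L1 X m))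
    (l1 : H1 →ₗ[ℝ] H0) (l2 : H0 →ₗ[ℝ] H0 →ₗ[ℝ] H0) (l2m : H0 →ₗ[ℝ] H1 →ₗ[ℝ] H1)
    (hl2skew : ∀ a b : H0, l2 a b = - l2 b a)
    (hchain1 : ∀ (a : H0) (m : H1), l1 (l2m a m) = l2 a (l1 m))
    (hchain2 : ∀ m p : H1, l2m (l1 m) p = - l2m (l1 p) m)
    (hjac0 : ∀ a b c : H0, l2 a (l2 b c) = l2 (l2 a b) c + l2 b (l2 a c))
    (hjacm : ∀ (a b : H0) (m : H1), l2m a (l2m b m) = l2m (l2 a b) m + l2m b (l2m a m))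
    (hder0 : ∀ (X : V) (a b : H0), L0 X (l2 a b) = l2 (L0 X a) b + l2 a (L0 X b))
    (hder1 : ∀ (X : V) (a : H0) (m : H1), L1 X (l2m a m) = l2m (L0 X a) m + l2m a (L1 X m))
    (hcomm : ∀ (X : V) (m : H1), L0 X (l1 m) = l1 (L1 X m))
    -- the Γ-connection (A,B) and the gauge transformation data (g, φ)
    (A : V →ₗ[ℝ] H0) (B : V →ₗ[ℝ] V →ₗ[ℝ] H1)
    (hBskew : ∀ X Y : V, B X Y = - B Y X)
    (AdA : H0 →ₗ[ℝ] H0) (Φg : H1 →ₗ[ℝ] H1) (θg : V →ₗ[ℝ] H0) (φ : V →ₗ[ℝ] H1)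
    -- Maurer–Cartan equation for the (pulled back) Maurer–Cartan form
    (hMC : ∀ X Y : V, L0 X (θg Y) - L0 Y (θg X) - θg ⁅X, Y⁆ = l2 (θg X) (θg Y))
    -- d(Ad_g a) = Ad_g (d a) + 𝔩₂(g*θ̄, Ad_g a)
    (hdAd : ∀ (X : V) (a : H0), L0 X (AdA a) = AdA (L0 X a) + l2 (θg X) (AdA a))
    -- Ad_g is a Lie algebra morphism
    (hAdhom : ∀ a b : H0, AdA (l2 a b) = l2 (AdA a) (AdA b))
    -- equivariance 𝔩₁ ∘ (Φ_g)_* = Ad_g ∘ 𝔩₁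
    (hequiv : ∀ m : H1, l1 (Φg m) = AdA (l1 m))
    -- (Φ_g)_* 𝔩₂(ξ, η) = 𝔩₂(Ad_g ξ, (Φ_g)_* η)
    (hΦl2 : ∀ (a : H0) (m : H1), Φg (l2m a m) = l2m (AdA a) (Φg m))
    -- the gauge transformed connection (A', B')
    (A' : V → H0)
    (hA' : ∀ X : V, A' X = AdA (A X) - θg X - l1 (φ X))
    (B' : V → V → H1)
    (hB' : ∀ X Y : V, B' X Y =
      Φg (B X Y) - (L1 X (φ Y) - L1 Y (φ X) - φ ⁅X, Y⁆)
        + l2m (l1 (φ X)) (φ Y)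
        - (l2m (AdA (A X)) (φ Y) - l2m (AdA (A Y)) (φ X))
        + (l2m (θg X) (φ Y) - l2m (θg Y) (φ X)))
    -- the fake curvatures
    (Fc : V → V → H0)
    (hFc : ∀ X Y : V, Fc X Y =
      L0 X (A Y) - L0 Y (A X) - A ⁅X, Y⁆ + l2 (A X) (A Y) - l1 (B X Y))
    (Fc' : V → V → H0)
    (hFc' : ∀ X Y : V, Fc' X Y =
      L0 X (A' Y) - L0 Y (A' X) - A' ⁅X, Y⁆ + l2 (A' X) (A' Y) - l1 (B' X Y)) :
    ∀ X Y : V, Fc' X Y = AdA (Fc X Y) :=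
  gauge_transformation_fake_curvature_general V H0 H1 L0 L1 l1 l2 l2m hl2skew hchain1 hcomm A B AdA
    Φg θg φ hMC hdAd hAdhom hequiv A' hA' B' hB' Fc hFc Fc' hFc'
end

section
/- Let (𝔥_1 ⊕ 𝔥_0; 𝔩_1, 𝔩_2) be a strict Lie 2-algebra, M a manifold, and (A,B) with A ∈ Ω^1(M,𝔥_0), B ∈ Ω^2(M,𝔥_1). On the graded vector bundle (M×𝔥_1) ⊕ (TM ⊕ (M×𝔥_0)), define ρ = pr_{TM}, l_1(m) = 𝔩_1(m), l_2(X+u, Y+v) = [X,Y] + L_X v + 𝔩_2(A(X),v) − L_Y u − 𝔩_2(A(Y),u) + fcurv(A,B)(X,Y) + 𝔩_2(u,v), l_2(X+u, m) = L_X m + 𝔩_2(A(X),m) + 𝔩_2(u,m), and l_3(X+u,Y+v,Z+w) = −curv(A,B)(X,Y,Z) + 𝔩_2(B(X,Y),w) + 𝔩_2(B(Y,Z),u) + 𝔩_2(B(Z,X),v). Then this is a transitive Lie 2-algebroid. -/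
/-!
The connections `∇⁰ = L₀ + 𝔩₂(A, ·)` and `∇¹ = L₁ + 𝔩₂(A, ·)` act by derivations of the strict
Lie 2-algebra, and both have curvature `𝔩₂(F_A, ·)` with `F_A = dA + ½𝔩₂(A, A)`, which satisfies the
Bianchi identity `d_{∇⁰} F_A = 0`. Since `R_γ = 𝔩₁ B − F_A`, the `F_A`-parts of all the equations
cancel, and what is left over are terms `𝔩₂(𝔩₁ B, ·)` that the Peiffer identities
`𝔩₁ 𝔩₂(u, m) = 𝔩₂(u, 𝔩₁ m)` and `𝔩₂(𝔩₁ m, p) = −𝔩₂(𝔩₁ p, m)` kill. For the last equation one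
uses `d_{∇¹}² B = 𝔩₂(F_A ∧ B)`, valid for any connection and any 2-form.
-/

namespace LieTwoAlgebroid

theorem lie_lie_sub_lie_lie_add_lie_lie {V : Type*} [LieRing V] (a b c : V) :
    ⁅⁅a, b⁆, c⁆ - ⁅⁅a, c⁆, b⁆ + ⁅⁅b, c⁆, a⁆ = 0 := by
  rw [← lie_skew ⁅a, b⁆ c, ← lie_skew ⁅a, c⁆ b, ← lie_skew ⁅b, c⁆ a, ← lie_skew a c, lie_neg]
  linear_combination (norm := abel) -lie_jacobi a b c

section CovariantExteriorDerivative

variable {V M F : Type*} [LieRing V] [AddCommGroup M] [FunLike F M M]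

def curvature (D : V → F) (X Y : V) (m : M) : M :=
  D X (D Y m) - D Y (D X m) - D ⁅X, Y⁆ m

def covExtDeriv₂ (D : V → F) (β : V → V → M) (X Y Z : V) : M :=
  D X (β Y Z) - D Y (β X Z) + D Z (β X Y) - β ⁅X, Y⁆ Z + β ⁅X, Z⁆ Y - β ⁅Y, Z⁆ X

def covExtDeriv₃ (D : V → F) (γ : V → V → V → M) (x₁ x₂ x₃ x₄ : V) : M :=
  D x₁ (γ x₂ x₃ x₄) - D x₂ (γ x₁ x₃ x₄) + D x₃ (γ x₁ x₂ x₄) - D x₄ (γ x₁ x₂ x₃)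
    - γ ⁅x₁, x₂⁆ x₃ x₄ + γ ⁅x₁, x₃⁆ x₂ x₄ - γ ⁅x₁, x₄⁆ x₂ x₃
    - γ ⁅x₂, x₃⁆ x₁ x₄ + γ ⁅x₂, x₄⁆ x₁ x₃ - γ ⁅x₃, x₄⁆ x₁ x₂

theorem covExtDeriv₂_comp {N G E : Type*} [AddCommGroup N] [FunLike G N N]
    [FunLike E M N] [AddMonoidHomClass E M N]
    (D : V → F) (D' : V → G) (f : E) (hf : ∀ X m, f (D X m) = D' X (f m))
    (β : V → V → M) (X Y Z : V) :
    covExtDeriv₂ D' (fun X Y => f (β X Y)) X Y Z = f (covExtDeriv₂ D β X Y Z) := by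
  simp only [covExtDeriv₂, map_add, map_sub, hf]

variable [AddMonoidHomClass F M M]

theorem covExtDeriv₂_sub (D : V → F) (β β' : V → V → M) (X Y Z : V) :
    covExtDeriv₂ D (fun X Y => β X Y - β' X Y) X Y Z =
      covExtDeriv₂ D β X Y Z - covExtDeriv₂ D β' X Y Z := by
  simp only [covExtDeriv₂, map_sub]
  abel

variable {R : Type*} [CommRing R] [Module R V] [Module R M]

theorem covExtDeriv₃_covExtDeriv₂ (D : V → F) (β : V →ₗ[R] V →ₗ[R] M)
    (hβ : ∀ X Y, β X Y = -β Y X) (x₁ x₂ x₃ x₄ : V) :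
    covExtDeriv₃ D (covExtDeriv₂ D fun X Y => β X Y) x₁ x₂ x₃ x₄ =
      curvature D x₁ x₂ (β x₃ x₄) - curvature D x₁ x₃ (β x₂ x₄)
        + curvature D x₁ x₄ (β x₂ x₃) + curvature D x₂ x₃ (β x₁ x₄)
        - curvature D x₂ x₄ (β x₁ x₃) + curvature D x₃ x₄ (β x₁ x₂) := by
  have jacobi : ∀ a b c d : V, β ⁅⁅a, b⁆, c⁆ d - β ⁅⁅a, c⁆, b⁆ d + β ⁅⁅b, c⁆, a⁆ d = 0 := by
    intro a b c d
    rw [← LinearMap.sub_apply, ← map_sub, ← LinearMap.add_apply, ← map_add,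
      lie_lie_sub_lie_lie_add_lie_lie, map_zero, LinearMap.zero_apply]
  simp only [covExtDeriv₃, covExtDeriv₂, curvature, map_add, map_sub]
  linear_combination (norm := abel)
    jacobi x₁ x₂ x₃ x₄ - jacobi x₁ x₂ x₄ x₃ + jacobi x₁ x₃ x₄ x₂ - jacobi x₂ x₃ x₄ x₁
      + hβ ⁅x₃, x₄⁆ ⁅x₁, x₂⁆ - hβ ⁅x₂, x₄⁆ ⁅x₁, x₃⁆ + hβ ⁅x₂, x₃⁆ ⁅x₁, x₄⁆

end CovariantExteriorDerivative

section GammaConnection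

variable {R V H₀ H₁ : Type*} [CommRing R] [LieRing V] [Module R V]
  [AddCommGroup H₀] [Module R H₀] [AddCommGroup H₁] [Module R H₁]

structure IsStrictLie2Algebra (l₁ : H₁ →ₗ[R] H₀) (l₂ : H₀ →ₗ[R] H₀ →ₗ[R] H₀)
    (l₂m : H₀ →ₗ[R] H₁ →ₗ[R] H₁) : Prop where
  skew : ∀ a b, l₂ a b = -l₂ b a
  l₁_l₂m : ∀ a m, l₁ (l₂m a m) = l₂ a (l₁ m)
  l₂m_l₁ : ∀ m p, l₂m (l₁ m) p = -l₂m (l₁ p) m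
  jacobi : ∀ a b c, l₂ a (l₂ b c) = l₂ (l₂ a b) c + l₂ b (l₂ a c)
  jacobi_l₂m : ∀ a b m, l₂m a (l₂m b m) = l₂m (l₂ a b) m + l₂m b (l₂m a m)

/-- `V` models the vector fields on `M`, and `L₀`, `L₁` the Lie derivative of `𝔥₀`- and
`𝔥₁`-valued functions. -/
structure IsRepresentationByDerivations (L₀ : V → H₀ →ₗ[R] H₀) (L₁ : V → H₁ →ₗ[R] H₁)
    (l₁ : H₁ →ₗ[R] H₀) (l₂ : H₀ →ₗ[R] H₀ →ₗ[R] H₀) (l₂m : H₀ →ₗ[R] H₁ →ₗ[R] H₁) : Prop where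
  lie₀ : ∀ X Y a, L₀ ⁅X, Y⁆ a = L₀ X (L₀ Y a) - L₀ Y (L₀ X a)
  lie₁ : ∀ X Y m, L₁ ⁅X, Y⁆ m = L₁ X (L₁ Y m) - L₁ Y (L₁ X m)
  deriv₀ : ∀ X a b, L₀ X (l₂ a b) = l₂ (L₀ X a) b + l₂ a (L₀ X b)
  deriv₁ : ∀ X a m, L₁ X (l₂m a m) = l₂m (L₀ X a) m + l₂m a (L₁ X m)
  comm : ∀ X m, L₀ X (l₁ m) = l₁ (L₁ X m)

variable (L₀ : V → H₀ →ₗ[R] H₀) (L₁ : V → H₁ →ₗ[R] H₁) (l₂ : H₀ →ₗ[R] H₀ →ₗ[R] H₀)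
  (l₂m : H₀ →ₗ[R] H₁ →ₗ[R] H₁) (A : V →ₗ[R] H₀)

def nabla₀ (X : V) : H₀ →ₗ[R] H₀ := L₀ X + l₂ (A X)

def nabla₁ (X : V) : H₁ →ₗ[R] H₁ := L₁ X + l₂m (A X)

/-- `F_A = dA + ½𝔩₂(A, A)`; the paper's `fcurv(A, B)` is `F_A − 𝔩₁ B`. -/
def curvatureForm (X Y : V) : H₀ :=
  L₀ X (A Y) - L₀ Y (A X) - A ⁅X, Y⁆ + l₂ (A X) (A Y)

variable {L₀ L₁ l₂ l₂m} {l₁ : H₁ →ₗ[R] H₀}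

theorem l₁_nabla₁ (hℓ : IsStrictLie2Algebra l₁ l₂ l₂m)
    (hL : IsRepresentationByDerivations L₀ L₁ l₁ l₂ l₂m) (X : V) (m : H₁) :
    l₁ (nabla₁ L₁ l₂m A X m) = nabla₀ L₀ l₂ A X (l₁ m) := by
  simp only [nabla₀, nabla₁, LinearMap.add_apply, map_add, hℓ.l₁_l₂m, hL.comm]

theorem nabla₀_l₂ (hℓ : IsStrictLie2Algebra l₁ l₂ l₂m)
    (hL : IsRepresentationByDerivations L₀ L₁ l₁ l₂ l₂m) (X : V) (v w : H₀) :
    nabla₀ L₀ l₂ A X (l₂ v w) = l₂ (nabla₀ L₀ l₂ A X v) w + l₂ v (nabla₀ L₀ l₂ A X w) := by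
  simp only [nabla₀, LinearMap.add_apply, map_add, hL.deriv₀, hℓ.jacobi (A X) v w]
  abel

theorem nabla₁_l₂m (hℓ : IsStrictLie2Algebra l₁ l₂ l₂m)
    (hL : IsRepresentationByDerivations L₀ L₁ l₁ l₂ l₂m) (X : V) (v : H₀) (m : H₁) :
    nabla₁ L₁ l₂m A X (l₂m v m) = l₂m (nabla₀ L₀ l₂ A X v) m + l₂m v (nabla₁ L₁ l₂m A X m) := by
  simp only [nabla₀, nabla₁, LinearMap.add_apply, map_add, hL.deriv₁, hℓ.jacobi_l₂m (A X) v m]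
  abel

theorem curvature_nabla₀ (hℓ : IsStrictLie2Algebra l₁ l₂ l₂m)
    (hL : IsRepresentationByDerivations L₀ L₁ l₁ l₂ l₂m) (X Y : V) (w : H₀) :
    curvature (nabla₀ L₀ l₂ A) X Y w = l₂ (curvatureForm L₀ l₂ A X Y) w := by
  simp only [curvature, curvatureForm, nabla₀, LinearMap.add_apply, map_add, map_sub,
    LinearMap.sub_apply, hL.deriv₀, hL.lie₀, hℓ.jacobi (A X) (A Y) w]
  abel

theorem curvature_nabla₁ (hℓ : IsStrictLie2Algebra l₁ l₂ l₂m)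
    (hL : IsRepresentationByDerivations L₀ L₁ l₁ l₂ l₂m) (X Y : V) (m : H₁) :
    curvature (nabla₁ L₁ l₂m A) X Y m = l₂m (curvatureForm L₀ l₂ A X Y) m := by
  simp only [curvature, curvatureForm, nabla₁, LinearMap.add_apply, map_add, map_sub,
    LinearMap.sub_apply, hL.deriv₁, hL.lie₁, hℓ.jacobi_l₂m (A X) (A Y) m]
  abel

theorem covExtDeriv₂_nabla₀_curvatureForm (hℓ : IsStrictLie2Algebra l₁ l₂ l₂m)
    (hL : IsRepresentationByDerivations L₀ L₁ l₁ l₂ l₂m) (X Y Z : V) :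
    covExtDeriv₂ (nabla₀ L₀ l₂ A) (curvatureForm L₀ l₂ A) X Y Z = 0 := by
  simp only [covExtDeriv₂, curvatureForm, nabla₀, LinearMap.add_apply, map_add, map_sub,
    hL.deriv₀, hL.lie₀]
  have jacobiV := congrArg A (lie_lie_sub_lie_lie_add_lie_lie X Y Z)
  simp only [map_add, map_sub, map_zero] at jacobiV
  have skew := hℓ.skew
  linear_combination (norm := abel) jacobiV + hℓ.jacobi (A X) (A Y) (A Z)
    - skew (A X) (A ⁅Y, Z⁆) + skew (A Y) (A ⁅X, Z⁆) - skew (A Z) (A ⁅X, Y⁆)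
    + skew (A Y) (L₀ Z (A X)) + skew (A Z) (L₀ X (A Y)) - skew (A Z) (L₀ Y (A X))
    + skew (A Z) (l₂ (A X) (A Y))

variable (B : V →ₗ[R] V →ₗ[R] H₁) {Rγ : V → V → H₀}

theorem curvature_nabla₀_add_l₂_add_l₁_eq_zero (hℓ : IsStrictLie2Algebra l₁ l₂ l₂m)
    (hL : IsRepresentationByDerivations L₀ L₁ l₁ l₂ l₂m)
    (hRγ : ∀ X Y, Rγ X Y = l₁ (B X Y) - curvatureForm L₀ l₂ A X Y) (X Y : V) (w : H₀) :
    curvature (nabla₀ L₀ l₂ A) X Y w + l₂ (Rγ X Y) w + l₁ (l₂m w (B X Y)) = 0 := by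
  rw [curvature_nabla₀ A hℓ hL, hRγ, map_sub, LinearMap.sub_apply, hℓ.l₁_l₂m, hℓ.skew w]
  abel

theorem curvature_nabla₁_add_l₂m_add_l₂m_eq_zero (hℓ : IsStrictLie2Algebra l₁ l₂ l₂m)
    (hL : IsRepresentationByDerivations L₀ L₁ l₁ l₂ l₂m)
    (hRγ : ∀ X Y, Rγ X Y = l₁ (B X Y) - curvatureForm L₀ l₂ A X Y) (X Y : V) (m : H₁) :
    curvature (nabla₁ L₁ l₂m A) X Y m + l₂m (Rγ X Y) m + l₂m (l₁ m) (B X Y) = 0 := by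
  rw [curvature_nabla₁ A hℓ hL, hRγ, map_sub, LinearMap.sub_apply, hℓ.l₂m_l₁ m]
  abel

theorem covExtDeriv₂_nabla₀_eq_l₁_covExtDeriv₂_nabla₁ (hℓ : IsStrictLie2Algebra l₁ l₂ l₂m)
    (hL : IsRepresentationByDerivations L₀ L₁ l₁ l₂ l₂m)
    (hRγ : ∀ X Y, Rγ X Y = l₁ (B X Y) - curvatureForm L₀ l₂ A X Y) (X Y Z : V) :
    covExtDeriv₂ (nabla₀ L₀ l₂ A) Rγ X Y Z =
      l₁ (covExtDeriv₂ (nabla₁ L₁ l₂m A) (fun X Y => B X Y) X Y Z) := by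
  obtain rfl : Rγ = fun X Y => l₁ (B X Y) - curvatureForm L₀ l₂ A X Y := funext₂ hRγ
  rw [covExtDeriv₂_sub, covExtDeriv₂_nabla₀_curvatureForm A hℓ hL, sub_zero]
  exact covExtDeriv₂_comp _ _ l₁ (l₁_nabla₁ A hℓ hL) _ X Y Z

theorem leibniz_covExtDeriv₂_nabla₁_l₂m (hℓ : IsStrictLie2Algebra l₁ l₂ l₂m)
    (hL : IsRepresentationByDerivations L₀ L₁ l₁ l₂ l₂m) (u : H₀) (X Y Z : V) :
    l₂m u (covExtDeriv₂ (nabla₁ L₁ l₂m A) (fun X Y => B X Y) X Y Z)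
      - nabla₁ L₁ l₂m A X (l₂m u (B Y Z)) + nabla₁ L₁ l₂m A Y (l₂m u (B X Z))
      - nabla₁ L₁ l₂m A Z (l₂m u (B X Y))
      + l₂m (nabla₀ L₀ l₂ A X u) (B Y Z) - l₂m (nabla₀ L₀ l₂ A Y u) (B X Z)
      + l₂m (nabla₀ L₀ l₂ A Z u) (B X Y)
      + l₂m u (B ⁅X, Y⁆ Z) + l₂m u (B ⁅Z, X⁆ Y) + l₂m u (B ⁅Y, Z⁆ X) = 0 := by
  simp only [covExtDeriv₂, nabla₁_l₂m A hℓ hL, map_add, map_sub, ← lie_skew Z X, map_neg,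
    LinearMap.neg_apply]
  abel

theorem covExtDeriv₃_nabla₁_covExtDeriv₂_add_l₂m_eq_zero (hℓ : IsStrictLie2Algebra l₁ l₂ l₂m)
    (hL : IsRepresentationByDerivations L₀ L₁ l₁ l₂ l₂m) (hB : ∀ X Y, B X Y = -B Y X)
    (hRγ : ∀ X Y, Rγ X Y = l₁ (B X Y) - curvatureForm L₀ l₂ A X Y) (x₁ x₂ x₃ x₄ : V) :
    covExtDeriv₃ (nabla₁ L₁ l₂m A) (covExtDeriv₂ (nabla₁ L₁ l₂m A) fun X Y => B X Y) x₁ x₂ x₃ x₄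
      + (l₂m (Rγ x₁ x₂) (B x₃ x₄) - l₂m (Rγ x₁ x₃) (B x₂ x₄) + l₂m (Rγ x₁ x₄) (B x₂ x₃)
        + l₂m (Rγ x₂ x₃) (B x₁ x₄) - l₂m (Rγ x₂ x₄) (B x₁ x₃) + l₂m (Rγ x₃ x₄) (B x₁ x₂)) = 0 := by
  simp only [covExtDeriv₃_covExtDeriv₂ _ B hB, curvature_nabla₁ A hℓ hL, hRγ, map_sub,
    LinearMap.sub_apply]
  linear_combination (norm := abel) hℓ.l₂m_l₁ (B x₁ x₂) (B x₃ x₄)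
    - hℓ.l₂m_l₁ (B x₁ x₃) (B x₂ x₄) + hℓ.l₂m_l₁ (B x₁ x₄) (B x₂ x₃)

end GammaConnection

end LieTwoAlgebroid

open LieTwoAlgebroid

/-- the graded bundle `(M×𝔥₁) ⊕ (TM ⊕ (M×𝔥₀))` with the structure maps
induced by a `Γ`-connection `(A,B)` is a transitive Lie 2-algebroid: the equations
characterizing a transitive Lie 2-algebroid (Theorem 3.3 of the paper) hold for
`∇⁰_X u = L_X u + 𝔩₂(A(X),u)`, `∇¹_X m = L_X m + 𝔩₂(A(X),m)`, `R_γ = −fcurv(A,B)`,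
`I_γ = curv(A,B)`, `J(X,Y,w) = −𝔩₂(B(X,Y),w)`, `K = 0`, `𝔩₃ = 0`. -/
theorem gamma_connection_transitive_lie_2_algebroid
    (V H0 H1 : Type) [LieRing V] [Module ℝ V]
    [AddCommGroup H0] [Module ℝ H0] [AddCommGroup H1] [Module ℝ H1]
    (L0 : V → H0 →ₗ[ℝ] H0) (L1 : V → H1 →ₗ[ℝ] H1)
    (hL0 : ∀ (X Y : V) (a : H0), L0 ⁅X, Y⁆ a = L0 X (L0 Y a) - L0 Y (L0 X a))
    (hL1 : ∀ (X Y : V) (m : H1), L1 ⁅X, Y⁆ m = L1 X (L1 Y m) - L1 Y (L1 X m))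
    -- the strict Lie 2-algebra (𝔥₁ ⊕ 𝔥₀; 𝔩₁, 𝔩₂)
    (l1 : H1 →ₗ[ℝ] H0) (l2 : H0 →ₗ[ℝ] H0 →ₗ[ℝ] H0) (l2m : H0 →ₗ[ℝ] H1 →ₗ[ℝ] H1)
    (hl2skew : ∀ a b : H0, l2 a b = - l2 b a)
    (hchain1 : ∀ (a : H0) (m : H1), l1 (l2m a m) = l2 a (l1 m))
    (hchain2 : ∀ m p : H1, l2m (l1 m) p = - l2m (l1 p) m)
    (hjac0 : ∀ a b c : H0, l2 a (l2 b c) = l2 (l2 a b) c + l2 b (l2 a c))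
    (hjacm : ∀ (a b : H0) (m : H1), l2m a (l2m b m) = l2m (l2 a b) m + l2m b (l2m a m))
    (hder0 : ∀ (X : V) (a b : H0), L0 X (l2 a b) = l2 (L0 X a) b + l2 a (L0 X b))
    (hder1 : ∀ (X : V) (a : H0) (m : H1), L1 X (l2m a m) = l2m (L0 X a) m + l2m a (L1 X m))
    (hcomm : ∀ (X : V) (m : H1), L0 X (l1 m) = l1 (L1 X m))
    -- the Γ-connection (A, B)
    (A : V →ₗ[ℝ] H0) (B : V →ₗ[ℝ] V →ₗ[ℝ] H1)
    (hBskew : ∀ X Y : V, B X Y = - B Y X)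
    -- the structure maps of the split transitive Lie 2-algebroid
    (nab0 : V → H0 → H0)
    (hnab0 : ∀ (X : V) (u : H0), nab0 X u = L0 X u + l2 (A X) u)
    (nab1 : V → H1 → H1)
    (hnab1 : ∀ (X : V) (m : H1), nab1 X m = L1 X m + l2m (A X) m)
    -- R_γ = −fcurv(A,B)
    (Rg : V → V → H0)
    (hRg : ∀ X Y : V, Rg X Y =
      - (L0 X (A Y) - L0 Y (A X) - A ⁅X, Y⁆) - l2 (A X) (A Y) + l1 (B X Y))
    -- I_γ = curv(A,B)
    (Ig : V → V → V → H1)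
    (hIg : ∀ X Y Z : V, Ig X Y Z =
      L1 X (B Y Z) - L1 Y (B X Z) + L1 Z (B X Y)
        - B ⁅X, Y⁆ Z + B ⁅X, Z⁆ Y - B ⁅Y, Z⁆ X
        + l2m (A X) (B Y Z) - l2m (A Y) (B X Z) + l2m (A Z) (B X Y))
    -- J(X,Y,w) = −𝔩₂(B(X,Y), w) = 𝔩₂(w, B(X,Y))
    (JF : V → V → H0 → H1)
    (hJF : ∀ (X Y : V) (w : H0), JF X Y w = l2m w (B X Y)) :
    -- (3.1): 𝔩₁ ∘ ∇¹ = ∇⁰ ∘ 𝔩₁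
    (∀ (X : V) (m : H1), l1 (nab1 X m) = nab0 X (l1 m)) ∧
    -- (3.2): ∇⁰ is a derivation of 𝔩₂ (K = 0)
    (∀ (X : V) (v w : H0), nab0 X (l2 v w) = l2 (nab0 X v) w + l2 v (nab0 X w)) ∧
    -- (3.3): ∇¹ is a derivation of the mixed 𝔩₂ (K = 0)
    (∀ (X : V) (v : H0) (m : H1),
      nab1 X (l2m v m) = l2m (nab0 X v) m + l2m v (nab1 X m)) ∧
    -- (3.5): curvature identity for ∇⁰
    (∀ (X Y : V) (w : H0),
      nab0 X (nab0 Y w) - nab0 Y (nab0 X w) - nab0 ⁅X, Y⁆ w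
        + l2 (Rg X Y) w + l1 (JF X Y w) = 0) ∧
    -- (3.6): curvature identity for ∇¹
    (∀ (X Y : V) (m : H1),
      nab1 X (nab1 Y m) - nab1 Y (nab1 X m) - nab1 ⁅X, Y⁆ m
        + l2m (Rg X Y) m + JF X Y (l1 m) = 0) ∧
    -- (3.7): Bianchi identity d_{∇⁰}R_γ = 𝔩₁ I_γ
    (∀ X Y Z : V,
      nab0 X (Rg Y Z) - nab0 Y (Rg X Z) + nab0 Z (Rg X Y)
        - Rg ⁅X, Y⁆ Z + Rg ⁅X, Z⁆ Y - Rg ⁅Y, Z⁆ X = l1 (Ig X Y Z)) ∧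
    -- (3.8): the J-compatibility condition (K = 0)
    (∀ (u : H0) (X Y Z : V),
      l2m u (Ig X Y Z)
        - nab1 X (JF Y Z u) + nab1 Y (JF X Z u) - nab1 Z (JF X Y u)
        + JF Y Z (nab0 X u) - JF X Z (nab0 Y u) + JF X Y (nab0 Z u)
        + JF ⁅X, Y⁆ Z u + JF ⁅Z, X⁆ Y u + JF ⁅Y, Z⁆ X u = 0) ∧
    -- (3.9): d_{∇¹}I_γ + J∘R_γ = 0
    (∀ x1 x2 x3 x4 : V,
      (nab1 x1 (Ig x2 x3 x4) - nab1 x2 (Ig x1 x3 x4)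
          + nab1 x3 (Ig x1 x2 x4) - nab1 x4 (Ig x1 x2 x3)
          - Ig ⁅x1, x2⁆ x3 x4 + Ig ⁅x1, x3⁆ x2 x4 - Ig ⁅x1, x4⁆ x2 x3
          - Ig ⁅x2, x3⁆ x1 x4 + Ig ⁅x2, x4⁆ x1 x3 - Ig ⁅x3, x4⁆ x1 x2)
        + (JF x3 x4 (Rg x1 x2) - JF x2 x4 (Rg x1 x3) + JF x2 x3 (Rg x1 x4)
            + JF x1 x4 (Rg x2 x3) - JF x1 x3 (Rg x2 x4) + JF x1 x2 (Rg x3 x4)) = 0) := by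
  have hℓ : IsStrictLie2Algebra l1 l2 l2m := ⟨hl2skew, hchain1, hchain2, hjac0, hjacm⟩
  have hL : IsRepresentationByDerivations L0 L1 l1 l2 l2m := ⟨hL0, hL1, hder0, hder1, hcomm⟩
  have hRγ : ∀ X Y, Rg X Y = l1 (B X Y) - curvatureForm L0 l2 A X Y := fun X Y => by
    rw [hRg, curvatureForm]
    abel
  obtain rfl : nab0 = fun X => ⇑(nabla₀ L0 l2 A X) := funext₂ hnab0
  obtain rfl : nab1 = fun X => ⇑(nabla₁ L1 l2m A X) := funext₂ hnab1
  obtain rfl : Ig = covExtDeriv₂ (nabla₁ L1 l2m A) fun X Y => B X Y := by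
    funext X Y Z
    rw [hIg]
    simp only [covExtDeriv₂, nabla₁, LinearMap.add_apply]
    abel
  obtain rfl : JF = fun X Y w => l2m w (B X Y) := funext₃ hJF
  exact ⟨l₁_nabla₁ A hℓ hL, nabla₀_l₂ A hℓ hL, nabla₁_l₂m A hℓ hL,
    curvature_nabla₀_add_l₂_add_l₁_eq_zero A B hℓ hL hRγ,
    curvature_nabla₁_add_l₂m_add_l₂m_eq_zero A B hℓ hL hRγ,
    covExtDeriv₂_nabla₀_eq_l₁_covExtDeriv₂_nabla₁ A B hℓ hL hRγ,
    leibniz_covExtDeriv₂_nabla₁_l₂m A B hℓ hL,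
    covExtDeriv₃_nabla₁_covExtDeriv₂_add_l₂m_eq_zero A B hℓ hL hBskew hRγ⟩
end
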